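/- Let u be an infinite word over a finite alphabet A. Then D(u) = 0 if and only if for each factor w ∈ L(u), every complete mirror return to w in u is a palindrome. -/

import Mathlib

namespace ZDC

variable {A : Type*}

/-- The finite word `u_i u_{i+1} ⋯ u_{i+n-1}` occurring at position `i` in `u`. -/
def factorAt (u : ℕ → A) (i n : ℕ) : List A := (List.range n).map (fun j => u (i + j))

/-- `w` occurs at index `i` in the infinite word `u`. -/
def OccursAt (u : ℕ → A) (w : List A) (i : ℕ) : Prop := w = factorAt u i w.length

/-- The language of the infinite word `u`: the set of its factors. -/
def Lang (u : ℕ → A) : Set (List A) := {w | ∃ i, OccursAt u w i}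

/-- The language of `u` is closed under reversal. -/
def ClosedUnderReversal (u : ℕ → A) : Prop := ∀ w ∈ Lang u, w.reverse ∈ Lang u

/-- Number of distinct palindromic factors of a finite word (the empty word counts). -/
noncomputable def palCount (w : List A) : ℕ := {v : List A | v <:+: w ∧ v.reverse = v}.ncard

/-- Palindromic defect of a finite word: `|w| + 1 - p(w)`. -/
noncomputable def wordDefect (w : List A) : ℕ := w.length + 1 - palCount w

/-- Palindromic defect of an infinite word: sup of defects of its factors, in `ℕ∞`. -/
noncomputable def Defect (u : ℕ → A) : ℕ∞ := ⨆ w ∈ Lang u, (wordDefect w : ℕ∞)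

/-- `u` contains infinitely many palindromic factors. -/
def Palindromic (u : ℕ → A) : Prop := ∀ N, ∃ w ∈ Lang u, N ≤ w.length ∧ w.reverse = w

/-- `u` is (purely) periodic: `u = zzz⋯` for a nonempty `z`. -/
def Periodic (u : ℕ → A) : Prop := ∃ p, 0 < p ∧ ∀ n, u (n + p) = u n

/-- `u` is eventually periodic: `u = v zzz⋯`. -/
def EventuallyPeriodic (u : ℕ → A) : Prop := ∃ p, 0 < p ∧ ∃ N, ∀ n ≥ N, u (n + p) = u n

/-- `r` is a complete return word to `w` in `u`: it stretches from one occurrence of `w`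
to the next one (inclusively). -/
def IsCompleteReturn (u : ℕ → A) (w r : List A) : Prop :=
  ∃ i j, i < j ∧ OccursAt u w i ∧ OccursAt u w j ∧
    (∀ k, i < k → k < j → ¬ OccursAt u w k) ∧
    r = factorAt u i (j + w.length - i)

/-- `c` is a complete mirror return to `w` in `u`. -/
def IsCompleteMirrorReturn (u : ℕ → A) (w c : List A) : Prop :=
  c ∈ Lang u ∧
  ¬ w <:+: (c.drop 1).dropLast ∧ ¬ w.reverse <:+: (c.drop 1).dropLast ∧
  ((w <+: c ∧ w.reverse <:+ c) ∨ (w.reverse <+: c ∧ w <:+ c))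

/-- Occurrences of `w` and its reversal alternate in `u`. -/
def Alternate (u : ℕ → A) (w : List A) : Prop :=
  (∀ i j, i < j → OccursAt u w i → OccursAt u w j →
    (∀ k, i < k → k < j → ¬ OccursAt u w k) →
    ∃ k, i ≤ k ∧ k ≤ j ∧ OccursAt u w.reverse k) ∧
  (∀ i j, i < j → OccursAt u w.reverse i → OccursAt u w.reverse j →
    (∀ k, i < k → k < j → ¬ OccursAt u w.reverse k) →
    ∃ k, i ≤ k ∧ k ≤ j ∧ OccursAt u w k)

/-- Left extensions `E⁻(w)`. -/
def Eminus (u : ℕ → A) (w : List A) : Set A := {a | a :: w ∈ Lang u}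

/-- Right extensions `E⁺(w)`. -/
def Eplus (u : ℕ → A) (w : List A) : Set A := {b | w ++ [b] ∈ Lang u}

/-- Bilateral extensions `E(w)`. -/
def Eboth (u : ℕ → A) (w : List A) : Set (A × A) := {p | p.1 :: (w ++ [p.2]) ∈ Lang u}

/-- Symmetric bilateral extensions `E⁼(w)`. -/
def Esym (u : ℕ → A) (w : List A) : Set A := {a | a :: (w ++ [a]) ∈ Lang u}

/-- Bilateral multiplicity `m(w) = #E(w) − #E⁺(w) − #E⁻(w) + 1`. -/
noncomputable def mult (u : ℕ → A) (w : List A) : ℤ :=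
  ((Eboth u w).ncard : ℤ) - (Eplus u w).ncard - (Eminus u w).ncard + 1

/-- `w` is a bispecial factor of `u`. -/
def Bispecial (u : ℕ → A) (w : List A) : Prop :=
  2 ≤ (Eminus u w).ncard ∧ 2 ≤ (Eplus u w).ncard

/-- The bipartite extension graph `Γ(w)` with vertex set `E⁻(w) ⊔ E⁺(w)`. -/
def GammaGraph (u : ℕ → A) (w : List A) : SimpleGraph (↥(Eminus u w) ⊕ ↥(Eplus u w)) :=
  SimpleGraph.fromRel (fun x y =>
    ∃ (a : ↥(Eminus u w)) (b : ↥(Eplus u w)),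
      x = Sum.inl a ∧ y = Sum.inr b ∧ ((a : A), (b : A)) ∈ Eboth u w)

/-- The graph `Θ(w)` on the vertex set `E⁻(w)` for a palindrome `w`. -/
def ThetaGraph (u : ℕ → A) (w : List A) : SimpleGraph (↥(Eminus u w)) :=
  SimpleGraph.fromRel (fun a b => ((a : A), (b : A)) ∈ Eboth u w)

/-- Factor complexity `C(n)`. -/
noncomputable def complexity (u : ℕ → A) (n : ℕ) : ℕ :=
  {w ∈ Lang u | w.length = n}.ncard

/-- Palindromic complexity `P(n)`. -/
noncomputable def palComplexity (u : ℕ → A) (n : ℕ) : ℕ :=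
  {w ∈ Lang u | w.length = n ∧ w.reverse = w}.ncard

/-- Extension of a morphism (given by its letter images) to finite words. -/
def Apply (φ : A → List A) (x : List A) : List A := x.flatMap φ

/-- A morphism is primitive if some power maps each letter to a word containing all letters. -/
def Primitive (φ : A → List A) : Prop :=
  ∃ k, 1 ≤ k ∧ ∀ a b : A, b ∈ (Apply φ)^[k] [a]

/-- `u` is a fixed point of `φ`: the image of every prefix of `u` is again a prefix of `u`. -/
def IsFixedPoint (φ : A → List A) (u : ℕ → A) : Prop :=
  ∀ n, Apply φ (factorAt u 0 n) = factorAt u 0 (Apply φ (factorAt u 0 n)).length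

/-- `ψ ▷ φ`: `ψ` is a left conjugate of `φ` with conjugate word `w`,
i.e. `φ(a)w = wψ(a)` for every letter `a`. -/
def LeftConj (ψ φ : A → List A) (w : List A) : Prop :=
  ∀ a, φ a ++ w = w ++ ψ a

/-- A morphism is cyclic if all images of letters are powers of a common word. -/
def Cyclic (φ : A → List A) : Prop :=
  ∃ w : List A, ∀ a, ∃ k : ℕ, φ a = (List.replicate k w).flatten

/-- First letter (as an `Option`) of the image of a letter. -/
def Fst (φ : A → List A) : A → Option A := fun a => (φ a).head?

/-- Last letter (as an `Option`) of the image of a letter. -/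
def Lst (φ : A → List A) : A → Option A := fun a => (φ a).getLast?

/-- `φL` is the leftmost conjugate of `φ`: a left conjugate whose first-letter map
is not constant. -/
def IsLeftmostConj (φL φ : A → List A) : Prop :=
  (∃ w, LeftConj φL φ w) ∧ ¬ (∀ a b, Fst φL a = Fst φL b)

/-- `φR` is the rightmost conjugate of `φ`: a right conjugate whose last-letter map
is not constant. -/
def IsRightmostConj (φR φ : A → List A) : Prop :=
  (∃ w, LeftConj φ φR w) ∧ ¬ (∀ a b, Lst φR a = Lst φR b)

/-- A marked morphism: acyclic, and the first-letter map of its leftmost conjugate and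
the last-letter map of its rightmost conjugate are injective. -/
def Marked (φ : A → List A) : Prop :=
  ¬ Cyclic φ ∧
  (∃ φL, IsLeftmostConj φL φ ∧ Function.Injective (Fst φL)) ∧
  (∃ φR, IsRightmostConj φR φ ∧ Function.Injective (Lst φR))

end ZDC

/-!
Appending a letter to a word creates at most one new palindromic factor, its longest
palindromic suffix, and creates it exactly when that suffix is unioccurrent. So a word is rich
(has defect `0`) iff each of its prefixes has a unioccurrent longest palindromic suffix.

If all factors are rich and `c` is a complete mirror return to `w`, let `p` be the
(unioccurrent) longest palindromic suffix of `c`. If `|p| ≤ |w|`, then `p` is a prefix of `w`,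
so it also occurs at the start of `c`; if `|p| > |w|`, then `w` is a proper prefix of `p` and
occurs strictly inside `c`. Both are impossible unless `c = p`.
Conversely, if the longest palindromic suffix `p` of a factor occurred earlier in it, the
stretch from the last earlier occurrence to the end would be a complete mirror return to `p`,
hence a palindromic suffix longer than `p`.
-/

namespace List

variable {A : Type*}

lemma IsSuffix.reverse_isPrefix_of_palindrome {q p : List A} (hq : q <:+ p)
    (hp : p.reverse = p) : q.reverse <+: p :=
  hp ▸ hq.reverse

lemma IsPrefix.isPrefix_dropLast {p c : List A} (h : p <+: c) (hlt : p.length < c.length) :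
    p <+: c.dropLast := by
  rw [dropLast_eq_take]
  exact prefix_take_iff.mpr ⟨h, by omega⟩

lemma infix_drop_one_dropLast {s t : List A} (w : List A) (hs : s ≠ []) (ht : t ≠ []) :
    w <:+: ((s ++ (w ++ t)).drop 1).dropLast := by
  rw [drop_append_of_le_length (length_pos_iff.mpr hs), dropLast_append_of_ne_nil (by simp [ht]),
    dropLast_append_of_ne_nil ht, ← append_assoc]
  exact infix_append _ _ _

lemma exists_suffix_of_infix_dropLast {p l : List A} (h : p <:+: l.dropLast) (hl : l ≠ []) :
    ∃ c, c <:+ l ∧ p <+: c ∧ p.length < c.length := by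
  obtain ⟨s, t, hst⟩ := h
  refine ⟨p ++ t ++ [l.getLast hl], ⟨s, ?_⟩, prefix_append_of_prefix (prefix_append _ _), by simp⟩
  rw [← append_assoc, ← append_assoc, hst, dropLast_append_getLast]

end List

namespace ZDC

open List

variable {A : Type*}

lemma length_factorAt (u : ℕ → A) (i n : ℕ) : (factorAt u i n).length = n := by
  simp [factorAt]

lemma factorAt_add (u : ℕ → A) (i m n : ℕ) :
    factorAt u i (m + n) = factorAt u i m ++ factorAt u (i + m) n := by
  simp only [factorAt, range_add, map_append, map_map]
  congr 1
  exact map_congr_left fun j _ => by simp [Nat.add_assoc]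

lemma mem_lang_of_infix {u : ℕ → A} {v w : List A} (hvw : v <:+: w) (hw : w ∈ Lang u) :
    v ∈ Lang u := by
  obtain ⟨s, t, rfl⟩ := hvw
  obtain ⟨i, hi⟩ := hw
  refine ⟨i + s.length, ?_⟩
  rw [OccursAt, length_append, length_append, factorAt_add, factorAt_add] at hi
  exact (append_inj (append_inj hi (by simp [length_factorAt])).1 (length_factorAt ..).symm).2

def palFactors (w : List A) : Set (List A) := {v | v <:+: w ∧ v.reverse = v}

lemma palCount_eq_ncard (w : List A) : palCount w = (palFactors w).ncard := rfl

lemma palFactors_finite (w : List A) : (palFactors w).Finite :=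
  (finite_toSet w.sublists).subset fun _ hv => mem_sublists.mpr hv.1.sublist

lemma palFactors_nil : palFactors ([] : List A) = {[]} := by
  ext v
  simp only [palFactors, Set.mem_ofPred_eq, infix_nil, Set.mem_singleton_iff,
    and_iff_left_iff_imp]
  rintro rfl
  rfl

def IsLongestPalSuffix (p w : List A) : Prop :=
  p <:+ w ∧ p.reverse = p ∧ ∀ q, q <:+ w → q.reverse = q → q.length ≤ p.length

lemma exists_isLongestPalSuffix (w : List A) : ∃ p, IsLongestPalSuffix p w := by
  have hfin : {p : List A | p <:+ w ∧ p.reverse = p}.Finite :=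
    (palFactors_finite w).subset fun _ hp => ⟨hp.1.isInfix, hp.2⟩
  obtain ⟨p, hp, hmax⟩ := hfin.exists_maximalFor length _ ⟨[], nil_suffix, rfl⟩
  refine ⟨p, hp.1, hp.2, fun q hq hqq => ?_⟩
  by_contra! h
  have := hmax ⟨hq, hqq⟩ h.le
  omega

/-- A palindromic suffix of `w ++ [a]` shorter than `p` is a proper prefix of `p`, hence
a factor of `w`. -/
lemma palFactors_concat {p w : List A} {a : A} (hp : IsLongestPalSuffix p (w ++ [a])) :
    palFactors (w ++ [a]) = insert p (palFactors w) := by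
  obtain ⟨hps, hpp, hmax⟩ := hp
  ext q
  simp only [palFactors, Set.mem_insert_iff, Set.mem_ofPred_eq]
  constructor
  · rintro ⟨hq, hqq⟩
    rcases infix_concat_iff.mp hq with hqs | hqi
    · have hqp : q <+: p := hqq ▸ (suffix_of_suffix_length_le hqs hps
        (hmax q hqs hqq)).reverse_isPrefix_of_palindrome hpp
      rcases eq_or_lt_of_le hqp.length_le with hlen | hlt
      · exact Or.inl (hqp.eq_of_length hlen)
      · obtain ⟨t, rfl, ht⟩ := (suffix_concat_iff.mp hps).resolve_left
          (ne_nil_of_length_pos (by omega))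
        have hqt : q <+: t := (prefix_concat_iff.mp hqp).resolve_left fun h => by
          simp [h] at hlt
        exact Or.inr ⟨hqt.isInfix.trans ht.isInfix, hqq⟩
    · exact Or.inr ⟨hqi, hqq⟩
  · rintro (rfl | ⟨hq, hqq⟩)
    · exact ⟨hps.isInfix, hpp⟩
    · exact ⟨hq.trans (prefix_append w [a]).isInfix, hqq⟩

lemma palCount_nil : palCount ([] : List A) = 1 := by
  rw [palCount_eq_ncard, palFactors_nil, Set.ncard_singleton]

lemma palCount_concat_le (w : List A) (a : A) : palCount (w ++ [a]) ≤ palCount w + 1 := by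
  obtain ⟨p, hp⟩ := exists_isLongestPalSuffix (w ++ [a])
  rw [palCount_eq_ncard, palCount_eq_ncard, palFactors_concat hp]
  exact Set.ncard_insert_le _ _

lemma palCount_concat_eq_succ_iff {p w : List A} {a : A} (hp : IsLongestPalSuffix p (w ++ [a])) :
    palCount (w ++ [a]) = palCount w + 1 ↔ ¬ p <:+: w := by
  rw [palCount_eq_ncard, palCount_eq_ncard, palFactors_concat hp]
  by_cases h : p <:+: w
  · simp [Set.ncard_insert_of_mem (show p ∈ palFactors w from ⟨h, hp.2.1⟩), h]
  · simp [Set.ncard_insert_of_notMem (fun hm => h hm.1) (palFactors_finite w), h]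

lemma palCount_le_length_succ (w : List A) : palCount w ≤ w.length + 1 := by
  induction w using reverseRecOn with
  | nil => exact palCount_nil.le
  | append_singleton w a ih =>
    have := palCount_concat_le w a
    simp only [length_append, length_singleton]
    omega

def Rich (w : List A) : Prop := palCount w = w.length + 1

lemma rich_nil : Rich ([] : List A) := palCount_nil

lemma rich_concat_iff {p w : List A} {a : A} (hp : IsLongestPalSuffix p (w ++ [a])) :
    Rich (w ++ [a]) ↔ Rich w ∧ ¬ p <:+: w := by
  rw [← palCount_concat_eq_succ_iff hp]
  have := palCount_concat_le w a
  have := palCount_le_length_succ w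
  simp only [Rich, length_append, length_singleton]
  omega

lemma wordDefect_eq_zero_iff {w : List A} : wordDefect w = 0 ↔ Rich w := by
  have := palCount_le_length_succ w
  unfold wordDefect Rich
  omega

lemma defect_eq_zero_iff (u : ℕ → A) : Defect u = 0 ↔ ∀ w ∈ Lang u, Rich w := by
  simp only [Defect, ENat.iSup_eq_zero, Nat.cast_eq_zero, wordDefect_eq_zero_iff]

lemma reverse_eq_of_mirror_ends {p c w : List A} (hp : IsLongestPalSuffix p c)
    (huniq : ¬ p <:+: c.dropLast) (hw : ¬ w <:+: (c.drop 1).dropLast)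
    (hpre : w <+: c) (hsuf : w.reverse <:+ c) : c.reverse = c := by
  obtain ⟨hps, hpp, -⟩ := hp
  by_contra hc
  have hpc : p.length < c.length :=
    lt_of_le_of_ne hps.length_le fun h => hc (hps.eq_of_length h ▸ hpp)
  rcases le_or_gt p.length w.length with hle | hlt
  · have hpw : p <+: w := by
      simpa [hpp] using (suffix_of_suffix_length_le hps hsuf (by simpa using hle)).reverse
    exact huniq ((hpw.trans hpre).isPrefix_dropLast hpc).isInfix
  · have hwp : w <+: p := by
      simpa using (suffix_of_suffix_length_le hsuf hps (by simpa using hlt.le)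
        ).reverse_isPrefix_of_palindrome hpp
    obtain ⟨t, rfl⟩ := hwp
    obtain ⟨s, rfl⟩ := hps
    have hs : s ≠ [] := by rintro rfl; simp at hpc
    have ht : t ≠ [] := by rintro rfl; simp at hlt
    exact hw (infix_drop_one_dropLast w hs ht)

lemma reverse_eq_of_isCompleteMirrorReturn {u : ℕ → A} (hrich : ∀ v ∈ Lang u, Rich v)
    {w c : List A} (hc : IsCompleteMirrorReturn u w c) : c.reverse = c := by
  obtain ⟨hcL, hw, hw', hends⟩ := hc
  rcases c.eq_nil_or_concat' with rfl | ⟨c', a, rfl⟩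
  · rfl
  obtain ⟨p, hp⟩ := exists_isLongestPalSuffix (c' ++ [a])
  have huniq : ¬ p <:+: (c' ++ [a]).dropLast := by
    rw [dropLast_concat]
    exact ((rich_concat_iff hp).mp (hrich _ hcL)).2
  rcases hends with ⟨hpre, hsuf⟩ | ⟨hpre, hsuf⟩
  · exact reverse_eq_of_mirror_ends hp huniq hw hpre hsuf
  · exact reverse_eq_of_mirror_ends hp huniq hw' hpre (by rwa [reverse_reverse])

lemma not_infix_of_forall_mirror_reverse_eq {u : ℕ → A}
    (hmirror : ∀ w ∈ Lang u, ∀ c, IsCompleteMirrorReturn u w c → c.reverse = c)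
    {p w : List A} {a : A} (hwa : w ++ [a] ∈ Lang u) (hp : IsLongestPalSuffix p (w ++ [a])) :
    ¬ p <:+: w := by
  obtain ⟨hps, hpp, hmax⟩ := hp
  intro hocc
  have hp_pos : 0 < p.length := hmax [a] (suffix_append _ _) rfl
  -- the shortest suffix that begins with `p` and is longer than `p` is a mirror return to `p`
  set S := {c | c <:+ w ++ [a] ∧ p <+: c ∧ p.length < c.length}
  have hS : S.Finite :=
    ((w ++ [a]).tails.finite_toSet).subset fun c hc => (mem_tails _ _).mpr hc.1
  obtain ⟨c, ⟨hcs, hpc, hlt⟩, hmin⟩ := hS.exists_minimalFor length S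
    (exists_suffix_of_infix_dropLast (by rwa [dropLast_concat]) (by simp))
  have hinner : ¬ p <:+: (c.drop 1).dropLast := by
    intro h
    obtain ⟨c', hc's, hpc', hlt'⟩ :=
      exists_suffix_of_infix_dropLast h (ne_nil_of_length_pos (by rw [length_drop]; omega))
    have hc'c : c'.length < c.length := by
      have := hc's.length_le
      rw [length_drop] at this
      omega
    have := hmin ⟨hc's.trans ((drop_suffix 1 c).trans hcs), hpc', hlt'⟩ hc'c.le
    omega
  have hcL := mem_lang_of_infix hcs.isInfix hwa
  have hmr : IsCompleteMirrorReturn u p c :=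
    ⟨hcL, hinner, by rwa [hpp],
      Or.inl ⟨hpc, hpp.symm ▸ suffix_of_suffix_length_le hps hcs hlt.le⟩⟩
  have := hmax c hcs (hmirror p (mem_lang_of_infix hpc.isInfix hcL) c hmr)
  omega

lemma rich_of_forall_mirror_reverse_eq {u : ℕ → A}
    (hmirror : ∀ w ∈ Lang u, ∀ c, IsCompleteMirrorReturn u w c → c.reverse = c)
    {w : List A} (hw : w ∈ Lang u) : Rich w := by
  induction w using reverseRecOn with
  | nil => exact rich_nil
  | append_singleton w a ih =>
    obtain ⟨p, hp⟩ := exists_isLongestPalSuffix (w ++ [a])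
    exact (rich_concat_iff hp).mpr
      ⟨ih (mem_lang_of_infix (prefix_append w [a]).isInfix hw),
        not_infix_of_forall_mirror_reverse_eq hmirror hw hp⟩

end ZDC

open ZDC in
theorem stmt_16_general {A : Type*} (u : ℕ → A) :
    Defect u = 0 ↔
      ∀ w ∈ Lang u, ∀ c, IsCompleteMirrorReturn u w c → c.reverse = c := by
  rw [defect_eq_zero_iff]
  exact ⟨fun hrich _ _ _ hc => reverse_eq_of_isCompleteMirrorReturn hrich hc,
    fun hmirror _ hw => rich_of_forall_mirror_reverse_eq hmirror hw⟩

open ZDC in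
/-- `D(u) = 0` iff for each factor `w ∈ L(u)` every complete mirror
return to `w` in `u` is a palindrome. -/
theorem stmt_16 {A : Type*} [Fintype A] (u : ℕ → A) :
    Defect u = 0 ↔
      ∀ w ∈ Lang u, ∀ c, IsCompleteMirrorReturn u w c → c.reverse = c :=
  stmt_16_general u
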